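/- Let r₁, r₂, r₃ be positive real numbers. Then δ_r(r₁, r₂, r₃) ≥ π/√12, with equality if and only if r₁ = r₂ = r₃. -/

import Mathlib

open Real

/-- Inradius of the triangle formed by the centers of three mutually externally tangent
circles of radii `r₁, r₂, r₃`. -/
noncomputable def inradiusR (r₁ r₂ r₃ : ℝ) : ℝ := Real.sqrt (r₁ * r₂ * r₃ / (r₁ + r₂ + r₃))

/-- Area of that triangle (Heron's formula). -/
noncomputable def triAreaR (r₁ r₂ r₃ : ℝ) : ℝ := Real.sqrt (r₁ * r₂ * r₃ * (r₁ + r₂ + r₃))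

/-- Density of the three circles inside the triangle of their centers, in terms of radii. -/
noncomputable def deltaR (r₁ r₂ r₃ : ℝ) : ℝ :=
  ((π / 2 - arctan (r₁ / inradiusR r₁ r₂ r₃)) * r₁ ^ 2 +
      (π / 2 - arctan (r₂ / inradiusR r₁ r₂ r₃)) * r₂ ^ 2 +
      (π / 2 - arctan (r₃ / inradiusR r₁ r₂ r₃)) * r₃ ^ 2) / triAreaR r₁ r₂ r₃

/-! With `R` the inradius, the half-angles `θᵢ = arctan (R / rᵢ)` of the triangle of centres
sum to `π / 2` and `rᵢ = R cot θᵢ`, so the density is `∑ θᵢ cot² θᵢ / ∑ cot θᵢ`, and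
`δ ≥ c := π / √12` says `∑ g θᵢ ≥ 0` for `g θ = θ cot² θ - c cot θ`. On `(0, π / 2)` we have
`g'' θ = 2 (1 + cot² θ) (θ (1 + 3 cot² θ) - (2 + c) cot θ) > 0`, because `c < 1` and
`3 sin θ cos θ ≤ θ (1 + 2 cos² θ)`; since `g (π / 6) = 0`, Jensen's inequality for the strictly
convex `g` at the mean angle `π / 6` gives the bound, with equality iff the angles agree. -/

open Set

lemma hasDerivAt_cot {x : ℝ} (hx : sin x ≠ 0) : HasDerivAt cot (-(1 + cot x ^ 2)) x := by
  rw [show cot = fun y => cos y / sin y from funext cot_eq_cos_div_sin]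
  refine ((hasDerivAt_cos x).div (hasDerivAt_sin x) hx).congr_deriv ?_
  field_simp
  ring

lemma cot_pos_of_mem_Ioo {x : ℝ} (hx : x ∈ Ioo 0 (π / 2)) : 0 < cot x := by
  rw [cot_eq_cos_div_sin]
  exact div_pos (cos_pos_of_mem_Ioo ⟨by linarith [hx.1, pi_pos], hx.2⟩)
    (sin_pos_of_pos_of_lt_pi hx.1 (by linarith [hx.2, pi_pos]))

lemma mul_cos_le_sin {x : ℝ} (h0 : 0 ≤ x) (h1 : x < π / 2) : x * cos x ≤ sin x := by
  have hcos : 0 < cos x := cos_pos_of_mem_Ioo ⟨by linarith [pi_pos], h1⟩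
  have := le_tan h0 h1
  rwa [tan_eq_sin_div_cos, le_div_iff₀ hcos] at this

lemma three_mul_sin_mul_cos_le {x : ℝ} (h0 : 0 ≤ x) (h1 : x ≤ π / 2) :
    3 * (sin x * cos x) ≤ x * (1 + 2 * cos x ^ 2) := by
  let g : ℝ → ℝ := fun x => x * (1 + 2 * cos x ^ 2) - 3 * (sin x * cos x)
  -- `g' x = 4 sin x (sin x - x cos x)`
  have hg : ∀ x, HasDerivAt g (1 * (1 + 2 * cos x ^ 2) + x * (2 * (2 * cos x ^ 1 * -sin x))
      - 3 * (cos x * cos x + sin x * -sin x)) x := fun x =>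
    ((hasDerivAt_id x).mul (((hasDerivAt_cos x).pow 2).const_mul 2 |>.const_add 1)).sub
      (((hasDerivAt_sin x).mul (hasDerivAt_cos x)).const_mul 3)
  have hmono : MonotoneOn g (Icc 0 (π / 2)) := by
    refine monotoneOn_of_deriv_nonneg (convex_Icc _ _) (by fun_prop)
      (fun x _ => (hg x).differentiableAt.differentiableWithinAt) fun x hx => ?_
    rw [interior_Icc] at hx
    rw [(hg x).deriv]
    have := mul_cos_le_sin hx.1.le hx.2
    have := sin_nonneg_of_nonneg_of_le_pi hx.1.le (by linarith [hx.2, pi_pos])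
    nlinarith [sin_sq_add_cos_sq x]
  have := hmono ⟨le_rfl, by positivity⟩ ⟨h0, h1⟩ h0
  simpa [g] using this

lemma three_mul_cot_le {x : ℝ} (hx : x ∈ Ioo 0 (π / 2)) : 3 * cot x ≤ x * (1 + 3 * cot x ^ 2) := by
  have hsin : 0 < sin x := sin_pos_of_pos_of_lt_pi hx.1 (by linarith [hx.2, pi_pos])
  have := three_mul_sin_mul_cos_le hx.1.le hx.2.le
  rw [cot_eq_cos_div_sin]
  field_simp
  linear_combination this - x * sin_sq_add_cos_sq x

theorem strictConvexOn_mul_cot_sq_sub_mul_cot {c : ℝ} (hc : c < 1) :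
    StrictConvexOn ℝ (Ioo 0 (π / 2)) (fun x => x * cot x ^ 2 - c * cot x) := by
  have hsin : ∀ x ∈ Ioo 0 (π / 2), sin x ≠ 0 := fun x hx =>
    (sin_pos_of_pos_of_lt_pi hx.1 (by linarith [hx.2, pi_pos])).ne'
  let g' : ℝ → ℝ := fun x => cot x ^ 2 - (2 * x * cot x - c) * (1 + cot x ^ 2)
  have hg : ∀ x ∈ Ioo 0 (π / 2), HasDerivAt (fun x => x * cot x ^ 2 - c * cot x) (g' x) x := by
    intro x hx
    have hcot := hasDerivAt_cot (hsin x hx)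
    refine (((hasDerivAt_id' x).mul (hcot.pow 2)).sub (hcot.const_mul c)).congr_deriv ?_
    simp only [g', Pi.pow_apply]
    ring
  have hg' : ∀ x ∈ Ioo 0 (π / 2), HasDerivAt g'
      (2 * (1 + cot x ^ 2) * (x * (1 + 3 * cot x ^ 2) - (2 + c) * cot x)) x := by
    intro x hx
    have hcot := hasDerivAt_cot (hsin x hx)
    refine ((hcot.pow 2).sub ((((hasDerivAt_id' x).const_mul 2).mul hcot |>.sub_const c).mul
      ((hcot.pow 2).const_add 1))).congr_deriv ?_
    simp only [Pi.pow_apply, Pi.mul_apply]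
    ring
  refine StrictMonoOn.strictConvexOn_of_deriv (convex_Ioo _ _)
    (fun x hx => (hg x hx).continuousAt.continuousWithinAt) ?_
  rw [interior_Ioo]
  refine StrictMonoOn.congr ?_ fun x hx => (hg x hx).deriv.symm
  refine strictMonoOn_of_deriv_pos (convex_Ioo _ _)
    (fun x hx => (hg' x hx).continuousAt.continuousWithinAt) fun x hx => ?_
  rw [interior_Ioo] at hx
  rw [(hg' x hx).deriv]
  have hcot := cot_pos_of_mem_Ioo hx
  have := three_mul_cot_le hx
  have : (2 + c) * cot x < 3 * cot x := by nlinarith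
  exact mul_pos (by positivity) (by linarith)

lemma ConvexOn.three_mul_map_div_three_le {s : Set ℝ} {f : ℝ → ℝ} (hf : ConvexOn ℝ s f)
    {x y z : ℝ} (hx : x ∈ s) (hy : y ∈ s) (hz : z ∈ s) :
    3 * f ((x + y + z) / 3) ≤ f x + f y + f z := by
  have := hf.map_sum_le (t := Finset.univ) (w := fun _ => 3⁻¹) (p := ![x, y, z])
    (fun _ _ => by norm_num) (by simp) (fun i _ => by fin_cases i <;> assumption)
  simp only [Fin.sum_univ_three, smul_eq_mul, Matrix.cons_val_zero, Matrix.cons_val_one,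
    Matrix.cons_val] at this
  rw [show (3 : ℝ)⁻¹ * x + 3⁻¹ * y + 3⁻¹ * z = (x + y + z) / 3 by ring] at this
  linarith

lemma StrictConvexOn.three_mul_map_div_three_eq_iff {s : Set ℝ} {f : ℝ → ℝ}
    (hf : StrictConvexOn ℝ s f) {x y z : ℝ} (hx : x ∈ s) (hy : y ∈ s) (hz : z ∈ s) :
    3 * f ((x + y + z) / 3) = f x + f y + f z ↔ x = y ∧ y = z := by
  have := hf.map_sum_eq_iff_of_pos (t := Finset.univ) (w := fun _ => 3⁻¹) (p := ![x, y, z])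
    (fun _ _ => by norm_num) (by simp) (fun i _ => by fin_cases i <;> assumption)
  simp only [Fin.sum_univ_three, smul_eq_mul, Matrix.cons_val_zero, Matrix.cons_val_one,
    Matrix.cons_val, Finset.mem_univ, forall_const, Fin.forall_fin_succ, Matrix.cons_val_succ,
    Matrix.cons_val_fin_one, true_and, and_true] at this
  rw [show (3 : ℝ)⁻¹ * x + 3⁻¹ * y + 3⁻¹ * z = (x + y + z) / 3 by ring] at this
  refine ⟨fun h => ?_, ?_⟩
  · obtain ⟨⟨hxy, -⟩, ⟨-, hyz⟩, -⟩ := this.1 (by linarith)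
    exact ⟨hxy, hyz⟩
  · rintro ⟨rfl, rfl⟩
    rw [show (x + x + x) / 3 = x by ring]
    ring

theorem arctan_add_arctan_add_arctan {a b c : ℝ} (ha : 0 < a) (hb : 0 < b) (hc : 0 < c)
    (h : a * b + b * c + c * a = 1) : arctan a + arctan b + arctan c = π / 2 := by
  have hab : a * b < 1 := by nlinarith
  have hpos : 0 < (a + b) / (1 - a * b) := div_pos (by linarith) (by linarith)
  have hc' : c = ((a + b) / (1 - a * b))⁻¹ := by
    rw [inv_div, eq_div_iff (by linarith)]
    linear_combination h
  rw [arctan_add hab, hc', arctan_inv_of_pos hpos]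
  ring

lemma cot_pi_div_six : cot (π / 6) = √3 := by
  rw [← tan_inv_eq_cot, tan_pi_div_six, one_div, inv_inv]

lemma pi_div_sqrt_twelve : π / √12 = π * √3 / 6 := by
  have h3 : √3 ^ 2 = 3 := sq_sqrt (by norm_num)
  rw [show (12 : ℝ) = 2 ^ 2 * 3 by norm_num, sqrt_mul (by norm_num), sqrt_sq (by norm_num)]
  field_simp
  linear_combination -2 * h3

lemma pi_mul_sqrt_three_div_six_lt_one : π * √3 / 6 < 1 := by
  have h3 : √3 < 1.8 := by
    rw [sqrt_lt' (by norm_num)]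
    norm_num
  nlinarith [pi_lt_d2, sqrt_nonneg 3, pi_pos]

/-- The density of three mutually tangent circles in the triangle of their centres, in terms of
the half-angles `θᵢ` of that triangle: for inradius `R` the radii are `R * cot θᵢ`, the sectors
have areas `θᵢ * (R * cot θᵢ) ^ 2`, and the triangle has area `R ^ 2 * ∑ cot θᵢ`. -/
noncomputable def densityOfHalfAngles (θ₁ θ₂ θ₃ : ℝ) : ℝ :=
  (θ₁ * cot θ₁ ^ 2 + θ₂ * cot θ₂ ^ 2 + θ₃ * cot θ₃ ^ 2) / (cot θ₁ + cot θ₂ + cot θ₃)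

theorem le_densityOfHalfAngles {θ₁ θ₂ θ₃ : ℝ} (h₁ : θ₁ ∈ Ioo 0 (π / 2)) (h₂ : θ₂ ∈ Ioo 0 (π / 2))
    (h₃ : θ₃ ∈ Ioo 0 (π / 2)) (hsum : θ₁ + θ₂ + θ₃ = π / 2) :
    π * √3 / 6 ≤ densityOfHalfAngles θ₁ θ₂ θ₃ ∧
      (densityOfHalfAngles θ₁ θ₂ θ₃ = π * √3 / 6 ↔ θ₁ = θ₂ ∧ θ₂ = θ₃) := by
  have hconv := strictConvexOn_mul_cot_sq_sub_mul_cot pi_mul_sqrt_three_div_six_lt_one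
  have hcenter : (θ₁ + θ₂ + θ₃) / 3 = π / 6 := by rw [hsum]; ring
  have hzero : π / 6 * cot (π / 6) ^ 2 - π * √3 / 6 * cot (π / 6) = 0 := by
    rw [cot_pi_div_six]
    ring
  have hjensen := hconv.convexOn.three_mul_map_div_three_le h₁ h₂ h₃
  have hjensen_eq := hconv.three_mul_map_div_three_eq_iff h₁ h₂ h₃
  simp only [hcenter, hzero, mul_zero] at hjensen hjensen_eq
  have hden : 0 < cot θ₁ + cot θ₂ + cot θ₃ := by
    linarith [cot_pos_of_mem_Ioo h₁, cot_pos_of_mem_Ioo h₂, cot_pos_of_mem_Ioo h₃]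
  unfold densityOfHalfAngles
  rw [le_div_iff₀ hden, div_eq_iff hden.ne', ← hjensen_eq]
  constructor
  · linarith
  · constructor <;> intro h <;> linarith

lemma inradiusR_pos {r₁ r₂ r₃ : ℝ} (h₁ : 0 < r₁) (h₂ : 0 < r₂) (h₃ : 0 < r₃) :
    0 < inradiusR r₁ r₂ r₃ :=
  sqrt_pos.2 (by positivity)

lemma inradiusR_sq_mul {r₁ r₂ r₃ : ℝ} (h₁ : 0 < r₁) (h₂ : 0 < r₂) (h₃ : 0 < r₃) :
    inradiusR r₁ r₂ r₃ ^ 2 * (r₁ + r₂ + r₃) = r₁ * r₂ * r₃ := by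
  rw [inradiusR, sq_sqrt (by positivity)]
  field_simp

lemma triAreaR_eq_inradiusR_mul {r₁ r₂ r₃ : ℝ} (hs : 0 ≤ r₁ + r₂ + r₃) :
    triAreaR r₁ r₂ r₃ = inradiusR r₁ r₂ r₃ * (r₁ + r₂ + r₃) := by
  rcases hs.eq_or_lt with hs | hs
  · simp [triAreaR, ← hs]
  · have : r₁ * r₂ * r₃ * (r₁ + r₂ + r₃) =
        r₁ * r₂ * r₃ / (r₁ + r₂ + r₃) * (r₁ + r₂ + r₃) ^ 2 := by
      field_simp
    rw [triAreaR, inradiusR, this, sqrt_mul' _ (sq_nonneg _), sqrt_sq hs.le]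

lemma arctan_inradiusR_div_sum {r₁ r₂ r₃ : ℝ} (h₁ : 0 < r₁) (h₂ : 0 < r₂) (h₃ : 0 < r₃) :
    arctan (inradiusR r₁ r₂ r₃ / r₁) + arctan (inradiusR r₁ r₂ r₃ / r₂) +
      arctan (inradiusR r₁ r₂ r₃ / r₃) = π / 2 := by
  have hR := inradiusR_pos h₁ h₂ h₃
  refine arctan_add_arctan_add_arctan (by positivity) (by positivity) (by positivity) ?_
  field_simp
  linear_combination inradiusR_sq_mul h₁ h₂ h₃

theorem deltaR_eq_densityOfHalfAngles {r₁ r₂ r₃ : ℝ} (h₁ : 0 < r₁) (h₂ : 0 < r₂) (h₃ : 0 < r₃) :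
    deltaR r₁ r₂ r₃ = densityOfHalfAngles (arctan (inradiusR r₁ r₂ r₃ / r₁))
      (arctan (inradiusR r₁ r₂ r₃ / r₂)) (arctan (inradiusR r₁ r₂ r₃ / r₃)) := by
  have hR := inradiusR_pos h₁ h₂ h₃
  rw [deltaR, densityOfHalfAngles, triAreaR_eq_inradiusR_mul (by positivity)]
  set R := inradiusR r₁ r₂ r₃
  have hangle : ∀ r, 0 < r → π / 2 - arctan (r / R) = arctan (R / r) := fun r hr => by
    rw [← arctan_inv_of_pos (by positivity), inv_div]
  have hcot : ∀ r, cot (arctan (R / r)) = r / R := fun r => by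
    rw [← tan_inv_eq_cot, tan_arctan, inv_div]
  rw [hangle r₁ h₁, hangle r₂ h₂, hangle r₃ h₃, hcot, hcot, hcot]
  field_simp

theorem min_density_radii (r₁ r₂ r₃ : ℝ) (h₁ : 0 < r₁) (h₂ : 0 < r₂) (h₃ : 0 < r₃) :
    deltaR r₁ r₂ r₃ ≥ π / Real.sqrt 12 ∧
      (deltaR r₁ r₂ r₃ = π / Real.sqrt 12 ↔ r₁ = r₂ ∧ r₂ = r₃) := by
  have hR := inradiusR_pos h₁ h₂ h₃
  have hmem : ∀ r, 0 < r → arctan (inradiusR r₁ r₂ r₃ / r) ∈ Ioo 0 (π / 2) := fun r hr =>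
    ⟨arctan_pos.2 (div_pos hR hr), arctan_lt_pi_div_two _⟩
  have hinj : ∀ a b,
      arctan (inradiusR r₁ r₂ r₃ / a) = arctan (inradiusR r₁ r₂ r₃ / b) ↔ a = b := fun a b => by
    rw [arctan_injective.eq_iff, div_eq_mul_inv, div_eq_mul_inv, mul_right_inj' hR.ne', inv_inj]
  obtain ⟨hle, heq⟩ := le_densityOfHalfAngles (hmem r₁ h₁) (hmem r₂ h₂) (hmem r₃ h₃)
    (arctan_inradiusR_div_sum h₁ h₂ h₃)
  rw [deltaR_eq_densityOfHalfAngles h₁ h₂ h₃, pi_div_sqrt_twelve, heq, hinj, hinj]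
  exact ⟨hle, Iff.rfl⟩
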